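/- arXiv:math/0406363 — 4 statements merged into one kernel-verified Lean document; each statement's English description precedes it below -/
import Mathlib

section
/- Let p be an odd prime and q an integer that is a primitive root modulo p^2. Then the set of powers of q is dense in the p-adic units Z_p^×. -/
/-- `q` is a primitive root modulo `m`: its residue class is a unit generating `(ZMod m)ˣ`. -/
def IsPrimitiveRootMod (q : ℤ) (m : ℕ) : Prop :=
  ∃ u : (ZMod m)ˣ, (u : ZMod m) = (q : ZMod m) ∧ ∀ v : (ZMod m)ˣ, v ∈ Subgroup.zpowers u

/-!
Since `q` has order `p (p - 1)` modulo `p²`, we get `q ^ (p - 1) = 1 + p a` with `p ∤ a`,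
so for odd `p` the power `q ^ (p - 1)` has order `p ^ (k - 1)` modulo `p ^ k`. Hence `q` has
order `φ (p ^ k)`, i.e. is a primitive root, modulo every `p ^ k` with `k ≥ 2`: the powers
of `u` meet every residue class of units modulo `p ^ k`, and these classes are arbitrarily
small open sets of `ℤ_[p]ˣ`.
-/

open Filter Subgroup PadicInt

namespace IsPrimitiveRootMod

variable {q : ℤ} {m : ℕ}

theorem orderOf_eq_totient [NeZero m] (hq : IsPrimitiveRootMod q m) :
    orderOf (q : ZMod m) = m.totient := by
  obtain ⟨u, hu, hgen⟩ := hq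
  rw [← hu, orderOf_units, orderOf_eq_card_of_forall_mem_zpowers hgen, Nat.card_eq_fintype_card,
    ZMod.card_units_eq_totient]

theorem of_orderOf_eq_totient [NeZero m] (h : orderOf (q : ZMod m) = m.totient) :
    IsPrimitiveRootMod q m := by
  have hunit : IsUnit (q : ZMod m) :=
    (orderOf_pos_iff.mp (h ▸ Nat.totient_pos.mpr (Nat.pos_of_neZero m))).isUnit
  have htop : zpowers hunit.unit = ⊤ := Subgroup.eq_top_of_card_eq _ <| by
    rw [Nat.card_zpowers, ← orderOf_units, hunit.unit_spec, h, Nat.card_eq_fintype_card,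
      ZMod.card_units_eq_totient]
  exact ⟨hunit.unit, hunit.unit_spec, fun v => htop ▸ mem_top v⟩

theorem exists_pow_eq (hq : IsPrimitiveRootMod q m) (w : (ZMod m)ˣ) :
    ∃ n : ℕ, (q : ZMod m) ^ n = w := by
  obtain ⟨u, hu, hgen⟩ := hq
  obtain ⟨n, hn⟩ := mem_powers_iff_mem_zpowers.mpr (hgen w)
  exact ⟨n, by rw [← hu, ← Units.val_pow_eq_pow_val]; exact congrArg Units.val hn⟩

end IsPrimitiveRootMod

section PrimePow

variable {p : ℕ} [hp : Fact p.Prime] {q : ℤ}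

theorem exists_pow_pred_eq_one_add_mul (hq : orderOf (q : ZMod (p ^ 2)) = p * (p - 1)) :
    ∃ a : ℤ, ¬ (p : ℤ) ∣ a ∧ q ^ (p - 1) = 1 + p * a := by
  have hmodp : (q : ZMod p) ^ (p - 1) = 1 := by
    have h := congrArg (ZMod.castHom (dvd_pow_self p two_ne_zero) (ZMod p))
      (pow_orderOf_eq_one (q : ZMod (p ^ 2)))
    rwa [map_pow, map_intCast, map_one, hq, pow_mul, ZMod.pow_card] at h
  obtain ⟨a, ha⟩ : (p : ℤ) ∣ q ^ (p - 1) - 1 := by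
    rw [← ZMod.intCast_zmod_eq_zero_iff_dvd]
    push_cast
    rw [hmodp, sub_self]
  refine ⟨a, fun ⟨b, hb⟩ => ?_, by linarith⟩
  have hmodp2 : (q : ZMod (p ^ 2)) ^ (p - 1) = 1 := by
    have h : ((q ^ (p - 1) - 1 : ℤ) : ZMod (p ^ 2)) = 0 := by
      rw [ZMod.intCast_zmod_eq_zero_iff_dvd]
      exact ⟨b, by rw [ha, hb]; push_cast; ring⟩
    push_cast at h
    exact sub_eq_zero.mp h
  have hle := Nat.le_of_dvd (Nat.sub_pos_of_lt hp.out.one_lt)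
    (hq ▸ orderOf_dvd_of_pow_eq_one hmodp2)
  have := Nat.mul_le_mul_right (p - 1) hp.out.two_le
  have := hp.out.two_le
  omega

theorem orderOf_intCast_zmod_prime_pow (hp2 : p ≠ 2)
    (hq : orderOf (q : ZMod (p ^ 2)) = p * (p - 1)) (n : ℕ) :
    orderOf (q : ZMod (p ^ (n + 2))) = p ^ (n + 1) * (p - 1) := by
  obtain ⟨a, ha, hqa⟩ := exists_pow_pred_eq_one_add_mul hq
  have hpow : orderOf ((q : ZMod (p ^ (n + 2))) ^ (p - 1)) = p ^ (n + 1) := by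
    rw [← Int.cast_pow, hqa]
    push_cast
    exact ZMod.orderOf_one_add_mul_prime hp.out hp2 a ha (n + 1)
  have hdvd : p - 1 ∣ orderOf (q : ZMod (p ^ (n + 2))) := by
    have := orderOf_map_dvd
      (ZMod.castHom (pow_dvd_pow p (by omega : 2 ≤ n + 2)) (ZMod (p ^ 2))).toMonoidHom
      (q : ZMod (p ^ (n + 2)))
    rw [RingHom.toMonoidHom_eq_coe, MonoidHom.coe_coe, map_intCast, hq] at this
    exact (dvd_mul_left _ _).trans this
  rw [orderOf_pow_of_dvd (Nat.sub_pos_of_lt hp.out.one_lt).ne' hdvd] at hpow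
  rw [← hpow, Nat.div_mul_cancel hdvd]

theorem IsPrimitiveRootMod.prime_pow_of_sq (hp2 : p ≠ 2) (hq : IsPrimitiveRootMod q (p ^ 2))
    (n : ℕ) : IsPrimitiveRootMod q (p ^ (n + 2)) := by
  have h2 := hq.orderOf_eq_totient
  rw [Nat.totient_prime_pow_succ hp.out, pow_one] at h2
  refine IsPrimitiveRootMod.of_orderOf_eq_totient ?_
  rw [orderOf_intCast_zmod_prime_pow hp2 h2, Nat.totient_prime_pow_succ hp.out]

end PrimePow

namespace PadicInt

variable {p : ℕ} [Fact p.Prime]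

theorem norm_sub_le_of_toZModPow_eq {x y : ℤ_[p]} {k : ℕ} (h : toZModPow k x = toZModPow k y) :
    ‖x - y‖ ≤ (p : ℝ)⁻¹ ^ k := by
  rw [inv_pow, ← zpow_natCast, ← zpow_neg, norm_le_pow_iff_mem_span_pow, ← ker_toZModPow,
    RingHom.mem_ker, map_sub, h, sub_self]

theorem dense_units_of_frequently_toZModPow {S : Set ℤ_[p]ˣ}
    (h : ∃ᶠ k in atTop, ∀ v : ℤ_[p]ˣ, ∃ s ∈ S, toZModPow k (s : ℤ_[p]) = toZModPow k v) :
    Dense S := by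
  refine dense_iff_inter_open.mpr fun U hU ⟨v, hv⟩ => ?_
  obtain ⟨ε, hε, hball⟩ :=
    Metric.isOpen_iff.mp (Units.isOpenEmbedding_val.isOpenMap U hU) v ⟨v, hv, rfl⟩
  have hsmall : ∀ᶠ k in atTop, (p : ℝ)⁻¹ ^ k < ε :=
    (tendsto_pow_atTop_nhds_zero_of_lt_one (by positivity)
      (inv_lt_one_of_one_lt₀ (by exact_mod_cast (Fact.out : p.Prime).one_lt))).eventually
      (gt_mem_nhds hε)
  obtain ⟨k, hkS, hkε⟩ := (h.and_eventually hsmall).exists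
  obtain ⟨s, hs, hsv⟩ := hkS v
  obtain ⟨t, ht, hts⟩ :=
    hball (mem_ball_iff_norm.mpr ((norm_sub_le_of_toZModPow_eq hsv).trans_lt hkε))
  exact ⟨s, Units.ext hts ▸ ht, hs⟩

end PadicInt

theorem powers_dense_in_padic_units (p : ℕ) [Fact p.Prime] (hodd : Odd p)
    (q : ℤ) (hq : IsPrimitiveRootMod q (p ^ 2))
    (u : ℤ_[p]ˣ) (hu : (u : ℤ_[p]) = (q : ℤ_[p])) :
    Dense (Set.range fun n : ℕ => u ^ n) := by
  have hp2 : p ≠ 2 := by rintro rfl; norm_num at hodd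
  refine dense_units_of_frequently_toZModPow
    ((eventually_ge_atTop 2).frequently.mono fun k hk v => ?_)
  obtain ⟨n, rfl⟩ := Nat.exists_eq_add_of_le' hk
  obtain ⟨m, hm⟩ :=
    (hq.prime_pow_of_sq hp2 n).exists_pow_eq (Units.map (toZModPow (n + 2)).toMonoidHom v)
  exact ⟨u ^ m, ⟨m, rfl⟩, by simp [hu, hm]⟩
end

section
/- Let p be a prime. For each r ≥ 0 let c_r = (c_{r,i})_{i≥0} be a sequence of rational numbers with c_{r,i} ∈ p^{-δ_p(r)}·Z_(p) for 0 ≤ i ≤ r-1, c_{r,r} ∈ p^{-δ_p(r)}·Z_(p)^×, and c_{r,i} = 0 for i > r; let ĉ_r be another family of sequences satisfying the same conditions. Fix n ≥ 0 and define S_n = {μ ∈ Π_{k≥0} Z_(p) : c_r·μ ∈ Z_(p) for 0 ≤ r ≤ n} and T_n = {μ : c_r·μ ∈ Z_(p) for 0 ≤ r ≤ n-1 and ĉ_n·μ ∈ Z_(p)}, where c_r·μ = Σ_i c_{r,i} μ_i (a finite sum). Then S_n ⊆ T_n implies S_n = T_n. -/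
/-! Let `μ` satisfy the conditions of `T_n` and put `t = (c_n·μ) / c_{n,n}`. The normalisation
of `c_n` makes `t` a `p`-local integer, so `μ' = μ - t·e_n` is still integral; it satisfies the
same conditions as `μ` for `r < n` and `c_n·μ' = 0`, hence `μ' ∈ S_n ⊆ T_n`. Then
`ĉ_{n,n} t = ĉ_n·μ - ĉ_n·μ'` is integral, and since `c_{n,n}` and `ĉ_{n,n}` have the same
`p`-adic norm `|p^{δ_p(n)}|⁻¹`, so is `c_{n,n} t = c_n·μ`. -/

/-- `x ∈ ℤ_(p)` : a rational is a `p`-local integer iff `p` does not divide its denominator. -/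
def inZLoc (p : ℕ) (x : ℚ) : Prop := ¬ (p ∣ x.den)

/-- `x` is a unit of `ℤ_(p)` : `p` divides neither numerator nor denominator. -/
def isUnitZLoc (p : ℕ) (x : ℚ) : Prop := inZLoc p x ∧ ¬ ((p : ℤ) ∣ x.num)

/-- `δ_p(n) = n + ν_p(n!)`. -/
def deltaP (p n : ℕ) : ℕ := n + (n.factorial).factorization p

section ZLoc

variable {p : ℕ}

theorem inZLoc_iff_padicNorm_le_one [hp : Fact p.Prime] (x : ℚ) :
    inZLoc p x ↔ padicNorm p x ≤ 1 := by
  unfold inZLoc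
  rcases eq_or_ne x 0 with rfl | hx
  · simp [hp.out.ne_one]
  rw [padicNorm.eq_zpow_of_nonzero hx, ← zpow_zero (p : ℚ),
    zpow_le_zpow_iff_right₀ (by exact_mod_cast hp.out.one_lt), neg_nonpos, padicValRat_def]
  constructor
  · intro hden
    simp [padicValNat.eq_zero_of_not_dvd hden]
  · intro hval hden
    -- `num` and `den` are coprime, so `p ∣ den` forces `ν_p(num) = 0 < ν_p(den)`.
    have hnum : ¬ (p : ℤ) ∣ x.num := fun hnum =>
      hp.out.ne_one <| Nat.dvd_one.mp <| x.reduced ▸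
        Nat.dvd_gcd (Int.natAbs_dvd_natAbs.mpr hnum) hden
    have := one_le_padicValNat_of_dvd x.pos.ne' hden
    rw [padicValInt.eq_zero_of_not_dvd hnum] at hval
    omega

theorem isUnitZLoc.ne_zero {x : ℚ} (h : isUnitZLoc p x) : x ≠ 0 := by
  rintro rfl
  exact h.2 (dvd_zero _)

theorem padicNorm_eq_one_of_isUnitZLoc {x : ℚ} (h : isUnitZLoc p x) : padicNorm p x = 1 := by
  rw [padicNorm.eq_zpow_of_nonzero h.ne_zero, padicValRat_def,
    padicValInt.eq_zero_of_not_dvd h.2, padicValNat.eq_zero_of_not_dvd h.1]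
  simp

theorem inZLoc_sub [Fact p.Prime] {x y : ℚ} (hx : inZLoc p x) (hy : inZLoc p y) :
    inZLoc p (x - y) := by
  rw [inZLoc_iff_padicNorm_le_one] at *
  exact padicNorm.sub.trans (max_le hx hy)

theorem padicNorm_eq_of_isUnitZLoc_mul [Fact p.Prime] {q x y : ℚ} (hx : isUnitZLoc p (q * x))
    (hy : isUnitZLoc p (q * y)) : padicNorm p x = padicNorm p y := by
  have hq : padicNorm p q ≠ 0 := padicNorm.nonzero (left_ne_zero_of_mul hx.ne_zero)
  have := (padicNorm_eq_one_of_isUnitZLoc hx).trans (padicNorm_eq_one_of_isUnitZLoc hy).symm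
  rw [padicNorm.mul, padicNorm.mul] at this
  exact mul_left_cancel₀ hq this

theorem padicNorm_sum_mul_le_of_isUnitZLoc [Fact p.Prime] {q : ℚ} {a μ : ℕ → ℚ} {n : ℕ}
    (ha : ∀ i < n, inZLoc p (q * a i)) (hn : isUnitZLoc p (q * a n))
    (hμ : ∀ k, inZLoc p (μ k)) :
    padicNorm p (∑ i ∈ Finset.range (n + 1), a i * μ i) ≤ padicNorm p (a n) := by
  have hlead := padicNorm_eq_one_of_isUnitZLoc hn
  have hq : 0 < padicNorm p q :=
    (padicNorm.nonneg q).lt_of_ne' (padicNorm.nonzero (left_ne_zero_of_mul hn.ne_zero))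
  have hsum : padicNorm p (q * ∑ i ∈ Finset.range (n + 1), a i * μ i) ≤ 1 := by
    rw [Finset.mul_sum]
    refine padicNorm.sum_le' (fun i hi => ?_) zero_le_one
    have hqa : padicNorm p (q * a i) ≤ 1 := by
      rcases (Finset.mem_range_succ_iff.mp hi).lt_or_eq with hi | rfl
      · exact (inZLoc_iff_padicNorm_le_one _).mp (ha i hi)
      · exact hlead.le
    rw [← mul_assoc, padicNorm.mul]
    exact mul_le_one₀ hqa (padicNorm.nonneg _) ((inZLoc_iff_padicNorm_le_one _).mp (hμ i))
  rw [padicNorm.mul] at hsum hlead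
  exact le_of_mul_le_mul_left (hsum.trans hlead.ge) hq

theorem inZLoc_sum_mul_div_of_isUnitZLoc [Fact p.Prime] {q : ℚ} {a μ : ℕ → ℚ} {n : ℕ}
    (ha : ∀ i < n, inZLoc p (q * a i)) (hn : isUnitZLoc p (q * a n))
    (hμ : ∀ k, inZLoc p (μ k)) :
    inZLoc p ((∑ i ∈ Finset.range (n + 1), a i * μ i) / a n) := by
  rw [inZLoc_iff_padicNorm_le_one, padicNorm.div]
  exact div_le_one_of_le₀ (padicNorm_sum_mul_le_of_isUnitZLoc ha hn hμ) (padicNorm.nonneg _)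

end ZLoc

section Update

variable {a μ : ℕ → ℚ} {n : ℕ}

theorem sum_mul_update_of_lt {r : ℕ} (hr : r < n) (x : ℚ) :
    ∑ i ∈ Finset.range (r + 1), a i * Function.update μ n x i =
      ∑ i ∈ Finset.range (r + 1), a i * μ i :=
  Finset.sum_congr rfl fun i hi => by
    rw [Function.update_of_ne (by have := Finset.mem_range.mp hi; omega)]

theorem sum_mul_update_self (x : ℚ) :
    ∑ i ∈ Finset.range (n + 1), a i * Function.update μ n x i =
      ∑ i ∈ Finset.range (n + 1), a i * μ i + a n * (x - μ n) := by
  rw [Finset.sum_range_succ, Finset.sum_range_succ, Function.update_self,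
    Finset.sum_congr rfl fun i hi => by
      rw [Function.update_of_ne (Finset.mem_range.mp hi).ne]]
  ring

theorem sum_mul_update_sub_div_self (ha : a n ≠ 0) :
    ∑ i ∈ Finset.range (n + 1), a i *
      Function.update μ n (μ n - (∑ j ∈ Finset.range (n + 1), a j * μ j) / a n) i = 0 := by
  rw [sum_mul_update_self, sub_sub_cancel_left, mul_neg, mul_div_cancel₀ _ ha, add_neg_cancel]

end Update

theorem congruence_exchange_general (p : ℕ) (hp : p.Prime)
    (c chat : ℕ → ℕ → ℚ)
    (hc1 : ∀ r i, i < r → inZLoc p ((p : ℚ) ^ deltaP p r * c r i))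
    (hc2 : ∀ r, isUnitZLoc p ((p : ℚ) ^ deltaP p r * c r r))
    (hd2 : ∀ r, isUnitZLoc p ((p : ℚ) ^ deltaP p r * chat r r))
    (n : ℕ) (S T : Set (ℕ → ℚ))
    (hS : S = {μ | (∀ k, inZLoc p (μ k)) ∧
        ∀ r ≤ n, inZLoc p (∑ i ∈ Finset.range (r + 1), c r i * μ i)})
    (hT : T = {μ | (∀ k, inZLoc p (μ k)) ∧
        (∀ r < n, inZLoc p (∑ i ∈ Finset.range (r + 1), c r i * μ i)) ∧
        inZLoc p (∑ i ∈ Finset.range (n + 1), chat n i * μ i)}) :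
    S ⊆ T → S = T := by
  have := Fact.mk hp
  subst hS hT
  intro hST
  refine hST.antisymm fun μ ⟨hμ, hlow, hhat⟩ =>
    ⟨hμ, fun r hr => hr.lt_or_eq.elim (hlow r) fun hrn => hrn ▸ ?_⟩
  have hcnn : c n n ≠ 0 := right_ne_zero_of_mul (hc2 n).ne_zero
  set t := (∑ i ∈ Finset.range (n + 1), c n i * μ i) / c n n
  have ht : inZLoc p t := inZLoc_sum_mul_div_of_isUnitZLoc (hc1 n) (hc2 n) hμ
  obtain ⟨-, -, hhat'⟩ := @hST (Function.update μ n (μ n - t)) <| by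
    refine ⟨fun k => ?_, fun r hr => ?_⟩
    · rcases eq_or_ne k n with rfl | hk
      · simpa using inZLoc_sub (hμ k) ht
      · simpa [Function.update_of_ne hk] using hμ k
    · rcases hr.lt_or_eq with hr | rfl
      · simpa [sum_mul_update_of_lt hr] using hlow r hr
      · simp [t, sum_mul_update_sub_div_self hcnn, inZLoc, hp.ne_one]
  have hchat_t : inZLoc p (chat n n * t) := by
    simpa [sum_mul_update_self] using inZLoc_sub hhat hhat'
  rw [inZLoc_iff_padicNorm_le_one] at hchat_t ⊢
  calc _ = padicNorm p (c n n * t) := by rw [mul_div_cancel₀ _ hcnn]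
    _ = padicNorm p (chat n n * t) := by
      rw [padicNorm.mul, padicNorm.mul, padicNorm_eq_of_isUnitZLoc_mul (hc2 n) (hd2 n)]
    _ ≤ 1 := hchat_t

theorem congruence_exchange (p : ℕ) (hp : p.Prime)
    (c chat : ℕ → ℕ → ℚ)
    (hc1 : ∀ r i, i < r → inZLoc p ((p : ℚ) ^ deltaP p r * c r i))
    (hc2 : ∀ r, isUnitZLoc p ((p : ℚ) ^ deltaP p r * c r r))
    (hc3 : ∀ r i, r < i → c r i = 0)
    (hd1 : ∀ r i, i < r → inZLoc p ((p : ℚ) ^ deltaP p r * chat r i))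
    (hd2 : ∀ r, isUnitZLoc p ((p : ℚ) ^ deltaP p r * chat r r))
    (hd3 : ∀ r i, r < i → chat r i = 0)
    (n : ℕ) (S T : Set (ℕ → ℚ))
    (hS : S = {μ | (∀ k, inZLoc p (μ k)) ∧
        ∀ r ≤ n, inZLoc p (∑ i ∈ Finset.range (r + 1), c r i * μ i)})
    (hT : T = {μ | (∀ k, inZLoc p (μ k)) ∧
        (∀ r < n, inZLoc p (∑ i ∈ Finset.range (r + 1), c r i * μ i)) ∧
        inZLoc p (∑ i ∈ Finset.range (n + 1), chat n i * μ i)}) :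
    S ⊆ T → S = T :=
  congruence_exchange_general p hp c chat hc1 hc2 hd2 n S T hS hT
end

section
/- Let p be a prime, and for each r ≥ 0 suppose c_r = (c_{r,i}) is a sequence of rationals with c_{r,i} ∈ p^{-δ_p(r)}Z_(p) for i < r, c_{r,r} ∈ p^{-δ_p(r)}Z_(p)^×, and c_{r,i} = 0 for i > r. Let n ≥ 0 and suppose μ = (μ_i) ∈ Π_{i≥0} Z_(p) satisfies c_r·μ ∈ Z_(p) for 0 ≤ r ≤ n. Then there exists μ' ∈ Π_{i≥0} Z_(p) with μ'_i = μ_i for 0 ≤ i ≤ n and c_r·μ' ∈ Z_(p) for all r ≥ 0. -/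
open Finset

section TriangularExtension

variable {K : Type*} [Field K] (c : ℕ → ℕ → K) (n : ℕ) (μ : ℕ → K)

noncomputable def triangularExtension : ℕ → K
  | r => if r ≤ n then μ r else
      -(∑ j ∈ (range r).attach, c r j * triangularExtension j) / c r r
decreasing_by exact mem_range.mp j.2

variable {c n μ}

lemma triangularExtension_of_le {r : ℕ} (h : r ≤ n) : triangularExtension c n μ r = μ r := by
  rw [triangularExtension, if_pos h]

lemma triangularExtension_of_lt {r : ℕ} (h : n < r) :
    triangularExtension c n μ r =
      -(∑ j ∈ range r, c r j * triangularExtension c n μ j) / c r r := by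
  rw [triangularExtension, if_neg h.not_ge,
    ← sum_attach (range r) (fun j => c r j * triangularExtension c n μ j)]

lemma sum_mul_triangularExtension_eq_zero {r : ℕ} (hr : n < r) (hdiag : c r r ≠ 0) :
    ∑ i ∈ range (r + 1), c r i * triangularExtension c n μ i = 0 := by
  rw [sum_range_succ, triangularExtension_of_lt hr, mul_div_cancel₀ _ hdiag, add_neg_cancel]

lemma sum_mul_triangularExtension_of_le {r : ℕ} (hr : r ≤ n) :
    ∑ i ∈ range (r + 1), c r i * triangularExtension c n μ i =
      ∑ i ∈ range (r + 1), c r i * μ i :=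
  sum_congr rfl fun i hi =>
    by rw [triangularExtension_of_le ((Nat.lt_succ_iff.mp (mem_range.mp hi)).trans hr)]

lemma triangularExtension_mem (R : Subring K) (hoff : ∀ r i, i < r → c r i / c r r ∈ R)
    (hμ : ∀ i, μ i ∈ R) (r : ℕ) : triangularExtension c n μ r ∈ R := by
  induction r using Nat.strong_induction_on with
  | _ r ih =>
    rcases le_or_gt r n with hr | hr
    · rw [triangularExtension_of_le hr]
      exact hμ r
    · rw [triangularExtension_of_lt hr, neg_div, sum_div]
      refine R.neg_mem (R.sum_mem fun j hj => ?_)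
      have hj := mem_range.mp hj
      rw [mul_div_right_comm]
      exact R.mul_mem (hoff r j hj) (ih j hj)

theorem exists_extension_of_lowerTriangular (R : Subring K) (hdiag : ∀ r, c r r ≠ 0)
    (hoff : ∀ r i, i < r → c r i / c r r ∈ R) (hμ : ∀ i, μ i ∈ R)
    (hcong : ∀ r ≤ n, ∑ i ∈ range (r + 1), c r i * μ i ∈ R) :
    ∃ μ' : ℕ → K, (∀ i, μ' i ∈ R) ∧ (∀ i ≤ n, μ' i = μ i) ∧
      ∀ r, ∑ i ∈ range (r + 1), c r i * μ' i ∈ R := by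
  refine ⟨triangularExtension c n μ, triangularExtension_mem R hoff hμ,
    fun i hi => triangularExtension_of_le hi, fun r => ?_⟩
  rcases le_or_gt r n with hr | hr
  · rw [sum_mul_triangularExtension_of_le hr]
    exact hcong r hr
  · rw [sum_mul_triangularExtension_eq_zero hr (hdiag r)]
    exact R.zero_mem

end TriangularExtension

section LocalIntegers

variable {p : ℕ}

def zLocSubring (hp : p.Prime) : Subring ℚ where
  carrier := {x | inZLoc p x}
  zero_mem' := by simpa [inZLoc] using hp.ne_one
  one_mem' := by simpa [inZLoc] using hp.ne_one
  neg_mem' := by simp [inZLoc]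
  add_mem' {x y} hx hy h := by
    rcases hp.dvd_mul.mp (h.trans (Rat.add_den_dvd x y)) with h | h
    exacts [hx h, hy h]
  mul_mem' {x y} hx hy h := by
    rcases hp.dvd_mul.mp (h.trans (Rat.mul_den_dvd x y)) with h | h
    exacts [hx h, hy h]

lemma inZLoc_inv_of_not_dvd_num {x : ℚ} (hx : ¬ (p : ℤ) ∣ x.num) : inZLoc p x⁻¹ := by
  have hx0 : x ≠ 0 := by
    rintro rfl
    exact hx (dvd_zero _)
  rw [inZLoc, Rat.den_inv_of_ne_zero hx0]
  exact fun h => hx (Int.dvd_natAbs.mp (Int.natCast_dvd_natCast.mpr h))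

lemma ne_zero_of_isUnitZLoc {x : ℚ} (hx : isUnitZLoc p x) : x ≠ 0 := by
  rintro rfl
  exact hx.2 (dvd_zero _)

end LocalIntegers

theorem extend_partial_congruence_solution_general (p : ℕ) (hp : p.Prime)
    (c : ℕ → ℕ → ℚ)
    (hc1 : ∀ r i, i < r → inZLoc p ((p : ℚ) ^ deltaP p r * c r i))
    (hc2 : ∀ r, isUnitZLoc p ((p : ℚ) ^ deltaP p r * c r r))
    (n : ℕ) (μ : ℕ → ℚ) (hμ : ∀ i, inZLoc p (μ i))
    (hcong : ∀ r ≤ n, inZLoc p (∑ i ∈ Finset.range (r + 1), c r i * μ i)) :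
    ∃ μ' : ℕ → ℚ, (∀ i, inZLoc p (μ' i)) ∧ (∀ i ≤ n, μ' i = μ i) ∧
      ∀ r, inZLoc p (∑ i ∈ Finset.range (r + 1), c r i * μ' i) := by
  have hpow : ∀ r, (p : ℚ) ^ deltaP p r ≠ 0 := fun r =>
    pow_ne_zero _ (by exact_mod_cast hp.ne_zero)
  have hdiag : ∀ r, c r r ≠ 0 := fun r => right_ne_zero_of_mul (ne_zero_of_isUnitZLoc (hc2 r))
  have hoff : ∀ r i, i < r → c r i / c r r ∈ zLocSubring hp := by
    intro r i hi
    have hratio : c r i / c r r =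
        ((p : ℚ) ^ deltaP p r * c r i) * ((p : ℚ) ^ deltaP p r * c r r)⁻¹ := by
      field_simp [hpow r, hdiag r]
    rw [hratio]
    exact (zLocSubring hp).mul_mem (hc1 r i hi) (inZLoc_inv_of_not_dvd_num (hc2 r).2)
  exact exists_extension_of_lowerTriangular (zLocSubring hp) hdiag hoff hμ hcong

theorem extend_partial_congruence_solution (p : ℕ) (hp : p.Prime)
    (c : ℕ → ℕ → ℚ)
    (hc1 : ∀ r i, i < r → inZLoc p ((p : ℚ) ^ deltaP p r * c r i))
    (hc2 : ∀ r, isUnitZLoc p ((p : ℚ) ^ deltaP p r * c r r))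
    (hc3 : ∀ r i, r < i → c r i = 0)
    (n : ℕ) (μ : ℕ → ℚ) (hμ : ∀ i, inZLoc p (μ i))
    (hcong : ∀ r ≤ n, inZLoc p (∑ i ∈ Finset.range (r + 1), c r i * μ i)) :
    ∃ μ' : ℕ → ℚ, (∀ i, inZLoc p (μ' i)) ∧ (∀ i ≤ n, μ' i = μ i) ∧
      ∀ r, inZLoc p (∑ i ∈ Finset.range (r + 1), c r i * μ' i) :=
  extend_partial_congruence_solution_general p hp c hc1 hc2 n μ hμ hcong
end

section
/- Let p be an odd prime, q a primitive root mod p^2, q̂ = q^{p-1}. Define C_{n,i} = (-1)^{n-i} q̂^{binom(n-i,2)} [n choose i]_{q̂} / p^{δ_p(n)} ∈ Q, where [n choose i]_{q̂} is the Gaussian binomial evaluated at q̂. Then C_{n,n} = u/p^{δ_p(n)} for some unit u ∈ Z_(p)^×, C_{n,i} ∈ p^{-δ_p(n)}Z_(p) for 0 ≤ i < n, and C_{n,i} = 0 for i > n. -/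
/-- The Gaussian (q-)binomial coefficient, via the Pascal-type recursion. -/
def gaussBinom {R : Type*} [CommRing R] (t : R) : ℕ → ℕ → R
  | _, 0 => 1
  | 0, _ + 1 => 0
  | n + 1, i + 1 => gaussBinom t n i + t ^ (i + 1) * gaussBinom t n (i + 1)

/-! Since `q̂` is an integer, `p ^ δ_p(n) * C n i = ± q̂ ^ binom(n - i, 2) * [n choose i]_q̂` is an
integer, hence `p`-integral, and for `i = n` it equals `1`. -/

section gaussBinom

variable {R : Type*} [CommRing R]

theorem map_gaussBinom {S : Type*} [CommRing S] (f : R →+* S) (t : R) :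
    ∀ n i, f (gaussBinom t n i) = gaussBinom (f t) n i
  | _, 0 => by simp [gaussBinom]
  | 0, _ + 1 => by simp [gaussBinom]
  | n + 1, i + 1 => by
    simp [gaussBinom, map_gaussBinom f t n i, map_gaussBinom f t n (i + 1)]

theorem gaussBinom_eq_zero_of_lt (t : R) : ∀ {n i}, n < i → gaussBinom t n i = 0
  | 0, _ + 1, _ => rfl
  | n + 1, i + 1, h => by
    simp [gaussBinom, gaussBinom_eq_zero_of_lt t (n := n) (i := i) (by omega),
      gaussBinom_eq_zero_of_lt t (n := n) (i := i + 1) (by omega)]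

theorem gaussBinom_self (t : R) : ∀ n, gaussBinom t n n = 1
  | 0 => rfl
  | n + 1 => by simp [gaussBinom, gaussBinom_self t n, gaussBinom_eq_zero_of_lt t n.lt_succ_self]

@[norm_cast]
theorem Int.cast_gaussBinom (t : ℤ) (n i : ℕ) :
    ((gaussBinom t n i : ℤ) : R) = gaussBinom (t : R) n i :=
  map_gaussBinom (Int.castRingHom R) t n i

end gaussBinom

section ZLoc

variable {p : ℕ}

theorem inZLoc_intCast (hp : p ≠ 1) (z : ℤ) : inZLoc p z := by
  simpa [inZLoc] using hp

theorem isUnitZLoc_one (hp : p ≠ 1) : isUnitZLoc p 1 := by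
  refine ⟨by exact_mod_cast inZLoc_intCast hp 1, ?_⟩
  rw [Rat.num_one, Int.natCast_dvd_ofNat, Nat.dvd_one]
  exact hp

end ZLoc

theorem coeffs_C_valuation_general (p : ℕ) (hp : p.Prime)
    (q : ℤ)
    (qh : ℚ) (hqh : qh = (q : ℚ) ^ (p - 1))
    (C : ℕ → ℕ → ℚ)
    (hC : ∀ n i, C n i = (-1) ^ (n - i) * qh ^ Nat.choose (n - i) 2 *
        gaussBinom qh n i / (p : ℚ) ^ deltaP p n) :
    (∀ n, isUnitZLoc p ((p : ℚ) ^ deltaP p n * C n n)) ∧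
    (∀ n i, i < n → inZLoc p ((p : ℚ) ^ deltaP p n * C n i)) ∧
    (∀ n i, n < i → C n i = 0) := by
  have hscaled : ∀ n i, (p : ℚ) ^ deltaP p n * C n i =
      (-1) ^ (n - i) * qh ^ Nat.choose (n - i) 2 * gaussBinom qh n i := fun n i => by
    rw [hC, mul_div_cancel₀ _ (pow_ne_zero _ (Nat.cast_ne_zero.mpr hp.ne_zero))]
  have hqh_int : qh = ((q ^ (p - 1) : ℤ) : ℚ) := by push_cast [hqh]; rfl
  refine ⟨fun n => ?_, fun n i _ => ?_, fun n i hlt => ?_⟩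
  · rw [hscaled, Nat.sub_self, gaussBinom_self]
    simpa using isUnitZLoc_one hp.ne_one
  · rw [hscaled, hqh_int]
    exact_mod_cast inZLoc_intCast hp.ne_one _
  · rw [hC, gaussBinom_eq_zero_of_lt qh hlt]
    simp

theorem coeffs_C_valuation (p : ℕ) (hp : p.Prime) (hodd : Odd p)
    (q : ℤ) (hq : IsPrimitiveRootMod q (p ^ 2))
    (qh : ℚ) (hqh : qh = (q : ℚ) ^ (p - 1))
    (C : ℕ → ℕ → ℚ)
    (hC : ∀ n i, C n i = (-1) ^ (n - i) * qh ^ Nat.choose (n - i) 2 *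
        gaussBinom qh n i / (p : ℚ) ^ deltaP p n) :
    (∀ n, isUnitZLoc p ((p : ℚ) ^ deltaP p n * C n n)) ∧
    (∀ n i, i < n → inZLoc p ((p : ℚ) ^ deltaP p n * C n i)) ∧
    (∀ n i, n < i → C n i = 0) :=
  coeffs_C_valuation_general p hp q qh hqh C hC
end
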